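/- Unconditional boundedness and non-negativity of the implicit scalar scheme: let ψ be a saturation with saturation level α. Suppose ρ^n, ρ^{n+1} satisfy the implicit scheme relations with no-flux boundary conditions. If 0 ≤ ρ_i^n ≤ α for all 1 ≤ i ≤ M, then 0 ≤ ρ_i^{n+1} ≤ α for all 1 ≤ i ≤ M, with no restriction on Δt. -/

import Mathlib

/-!
Above the saturation level `α` we have `ψ ≤ 0`, so a cell with `ρ'ᵢ > α` receives nothing
from its neighbours and can only lose mass: `ρ'ᵢ ≤ ρᵢ ≤ α`, a contradiction.

For non-negativity, a negative cell `j` whose left interface flux is non-negative has a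
strictly positive right flux; since the upwind flux out of a negative cell into a non-negative
one is non-positive, cell `j + 1` is negative too. Sweeping to the right this contradicts the
no-flux condition at `M + 1/2`. Hence a negative cell always has a negative left flux, which is
impossible for the leftmost negative cell.
-/

/-- A *saturation* with saturation level `α > 0`: a continuous non-increasing function
`ψ : [0,∞) → ℝ` with `ψ α = 0` and `(α − s)·ψ s > 0` for every `s ≥ 0`, `s ≠ α`. -/
def IsSaturation (ψ : ℝ → ℝ) (α : ℝ) : Prop :=
  0 < α ∧ ContinuousOn ψ (Set.Ici 0) ∧
    (∀ s₁ s₂, 0 ≤ s₁ → s₁ ≤ s₂ → ψ s₂ ≤ ψ s₁) ∧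
    ψ α = 0 ∧ ∀ s, 0 ≤ s → s ≠ α → 0 < (α - s) * ψ s

def upwindFlux (ψ : ℝ → ℝ) (a b u : ℝ) : ℝ :=
  a * max (ψ b) 0 * max u 0 + b * max (ψ a) 0 * min u 0

section upwindFlux

variable {ψ : ℝ → ℝ} {a b u : ℝ}

theorem upwindFlux_nonneg (ha : 0 ≤ a) (hb : b ≤ 0) : 0 ≤ upwindFlux ψ a b u :=
  add_nonneg (mul_nonneg (mul_nonneg ha (le_max_right _ _)) (le_max_right _ _))
    (mul_nonneg_of_nonpos_of_nonpos (mul_nonpos_of_nonpos_of_nonneg hb (le_max_right _ _))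
      (min_le_right _ _))

theorem upwindFlux_nonpos (ha : a ≤ 0) (hb : 0 ≤ b) : upwindFlux ψ a b u ≤ 0 :=
  add_nonpos (mul_nonpos_of_nonpos_of_nonneg (mul_nonpos_of_nonpos_of_nonneg ha (le_max_right _ _))
      (le_max_right _ _))
    (mul_nonpos_of_nonneg_of_nonpos (mul_nonneg hb (le_max_right _ _)) (min_le_right _ _))

theorem upwindFlux_nonneg_of_left_saturated (ha : 0 ≤ a) (hψ : ψ a ≤ 0) :
    0 ≤ upwindFlux ψ a b u := by
  rw [upwindFlux, max_eq_right hψ, mul_zero, zero_mul, add_zero]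
  exact mul_nonneg (mul_nonneg ha (le_max_right _ _)) (le_max_right _ _)

theorem upwindFlux_nonpos_of_right_saturated (hb : 0 ≤ b) (hψ : ψ b ≤ 0) :
    upwindFlux ψ a b u ≤ 0 := by
  rw [upwindFlux, max_eq_right hψ, mul_zero, zero_mul, zero_add]
  exact mul_nonpos_of_nonneg_of_nonpos (mul_nonneg hb (le_max_right _ _)) (min_le_right _ _)

end upwindFlux

theorem IsSaturation.apply_nonpos_of_le {ψ : ℝ → ℝ} {α s : ℝ} (hψ : IsSaturation ψ α)
    (hs : α ≤ s) : ψ s ≤ 0 :=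
  hψ.2.2.2.1 ▸ hψ.2.2.1 α s hψ.1.le hs

/-- One step `ρ ↦ ρ'` of the implicit upwind scheme on cells `1, …, M` with no-flux boundary
conditions and mesh ratio `r = Δt / Δx`; `u i` and `F i` stand for `u_{i+1/2}` and `F_{i+1/2}`. -/
structure IsUpwindImplicitStep (ψ : ℝ → ℝ) (r : ℝ) (M : ℕ) (u ρ ρ' F : ℕ → ℝ) : Prop where
  flux_zero : F 0 = 0
  flux_last : F M = 0
  flux_eq : ∀ i, 1 ≤ i → i + 1 ≤ M → F i = upwindFlux ψ (ρ' i) (ρ' (i + 1)) (u i)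
  update : ∀ i, 1 ≤ i → i ≤ M → ρ' i = ρ i - r * (F i - F (i - 1))

namespace IsUpwindImplicitStep

variable {ψ : ℝ → ℝ} {r : ℝ} {M : ℕ} {u ρ ρ' F : ℕ → ℝ}
  (h : IsUpwindImplicitStep ψ r M u ρ ρ' F)
include h

theorem flux_pred_nonpos_of_saturated {i : ℕ} (hi : 1 ≤ i) (hiM : i ≤ M) (hρ : 0 ≤ ρ' i)
    (hψ : ψ (ρ' i) ≤ 0) : F (i - 1) ≤ 0 := by
  obtain rfl | hi := hi.eq_or_lt
  · exact h.flux_zero.le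
  · rw [h.flux_eq (i - 1) (by omega) (by omega), Nat.sub_add_cancel hi.le]
    exact upwindFlux_nonpos_of_right_saturated hρ hψ

theorem flux_nonneg_of_saturated {i : ℕ} (hi : 1 ≤ i) (hiM : i ≤ M) (hρ : 0 ≤ ρ' i)
    (hψ : ψ (ρ' i) ≤ 0) : 0 ≤ F i := by
  obtain rfl | hiM := hiM.eq_or_lt
  · exact h.flux_last.ge
  · rw [h.flux_eq i hi hiM]
    exact upwindFlux_nonneg_of_left_saturated hρ hψ

theorem le_of_isSaturation {α : ℝ} (hψ : IsSaturation ψ α) (hr : 0 ≤ r)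
    (hρ : ∀ i, 1 ≤ i → i ≤ M → ρ i ≤ α) (i : ℕ) (hi : 1 ≤ i) (hiM : i ≤ M) : ρ' i ≤ α := by
  by_contra! hgt
  have hρ' : 0 ≤ ρ' i := hψ.1.le.trans hgt.le
  have hsat : ψ (ρ' i) ≤ 0 := hψ.apply_nonpos_of_le hgt.le
  have hout : 0 ≤ r * (F i - F (i - 1)) := mul_nonneg hr (sub_nonneg.2
    ((h.flux_pred_nonpos_of_saturated hi hiM hρ' hsat).trans
      (h.flux_nonneg_of_saturated hi hiM hρ' hsat)))
  linarith [h.update i hi hiM, hρ i hi hiM]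

theorem flux_pos_of_neg (hr : 0 ≤ r) {j : ℕ} (hj : 1 ≤ j) (hjM : j ≤ M) (hρ : 0 ≤ ρ j)
    (hneg : ρ' j < 0) (hin : 0 ≤ F (j - 1)) : 0 < F j := by
  have hrF : 0 < r * F j := by nlinarith [h.update j hj hjM, mul_nonneg hr hin]
  exact pos_of_mul_pos_right hrF hr

theorem flux_pred_neg_of_neg (hr : 0 ≤ r) (hρ : ∀ i, 1 ≤ i → i ≤ M → 0 ≤ ρ i) {j : ℕ}
    (hjM : j ≤ M) (hj : 1 ≤ j) (hneg : ρ' j < 0) : F (j - 1) < 0 := by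
  induction hjM using Nat.decreasingInduction with
  | self =>
    by_contra! hin
    exact (h.flux_pos_of_neg hr hj le_rfl (hρ M hj le_rfl) hneg hin).ne' h.flux_last
  | of_succ j hjM ih =>
    by_contra! hin
    have hout := h.flux_pos_of_neg hr hj hjM.le (hρ j hj hjM.le) hneg hin
    have hnext : ρ' (j + 1) < 0 := by
      by_contra! hnext
      exact hout.not_ge (h.flux_eq j hj hjM ▸ upwindFlux_nonpos hneg.le hnext)
    exact hout.not_gt (ih (by omega) hnext)

theorem nonneg (hr : 0 ≤ r) (hρ : ∀ i, 1 ≤ i → i ≤ M → 0 ≤ ρ i) (i : ℕ) (hi : 1 ≤ i)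
    (hiM : i ≤ M) : 0 ≤ ρ' i := by
  induction i, hi using Nat.le_induction with
  | base =>
    by_contra! hneg
    exact (h.flux_pred_neg_of_neg hr hρ hiM le_rfl hneg).ne h.flux_zero
  | succ i hi ih =>
    by_contra! hneg
    have hin := h.flux_pred_neg_of_neg hr hρ hiM (by omega) hneg
    rw [Nat.add_sub_cancel, h.flux_eq i hi hiM] at hin
    exact hin.not_ge (upwindFlux_nonneg (ih (by omega)) hneg.le)

end IsUpwindImplicitStep

theorem implicit_scalar_bound_preservation
    (ψ : ℝ → ℝ) (α : ℝ) (hψ : IsSaturation ψ α)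
    (Δx Δt : ℝ) (hΔx : 0 < Δx) (hΔt : 0 < Δt)
    (M : ℕ)
    (u ρn ρn1 F : ℕ → ℝ)
    (hF0 : F 0 = 0) (hFM : F M = 0)
    (hFdef : ∀ i, 1 ≤ i → i + 1 ≤ M →
      F i = ρn1 i * max (ψ (ρn1 (i + 1))) 0 * max (u i) 0 +
        ρn1 (i + 1) * max (ψ (ρn1 i)) 0 * min (u i) 0)
    (hscheme : ∀ i, 1 ≤ i → i ≤ M →
      ρn1 i = ρn i - Δt / Δx * (F i - F (i - 1)))
    (hρn : ∀ i, 1 ≤ i → i ≤ M → 0 ≤ ρn i ∧ ρn i ≤ α) :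
    ∀ i, 1 ≤ i → i ≤ M → 0 ≤ ρn1 i ∧ ρn1 i ≤ α := by
  have hstep : IsUpwindImplicitStep ψ (Δt / Δx) M u ρn ρn1 F := ⟨hF0, hFM, hFdef, hscheme⟩
  have hr : 0 ≤ Δt / Δx := div_nonneg hΔt.le hΔx.le
  intro i hi hiM
  exact ⟨hstep.nonneg hr (fun j hj hjM => (hρn j hj hjM).1) i hi hiM,
    hstep.le_of_isSaturation hψ hr (fun j hj hjM => (hρn j hj hjM).2) i hi hiM⟩
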